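/- arXiv:1710.10725 — 9 statements merged into one kernel-verified Lean document; each statement's English description precedes it below -/
import Mathlib

section
/- Let n ≥ 1 and let Y, Z be Hermitian n×n complex matrices. Then the trace of [Y,Z]² is a real number, and it satisfies −2·(tr(Y²)·tr(Z²) − (tr(YZ))²) ≤ tr([Y,Z]²) ≤ 0. (This expresses that the sectional curvature of the symmetric spaces SL(n,ℂ)/SU(n), SL(n,ℝ)/SO(n) and Sp(n,ℝ)/U(n/2), in the Riemannian metric induced by the Killing form B(X,Y) = 2n·tr(XY), lies in the interval [−1/n, 0].) -/
/-!
Conjugating by a unitary that diagonalises `Y` changes none of the traces, so we may take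
`Y = diag(d)` with `d` real. Writing `W` for (the conjugate of) `Z`, one finds
`tr([Y,Z]²) = -∑ᵢⱼ (dᵢ - dⱼ)² |Wᵢⱼ|²`, which gives the upper bound. For the lower bound,
`(dᵢ - dⱼ)² ≤ 2 ∑ₖ dₖ²` off the diagonal while diagonal terms vanish, so the sum is at most
`2 tr(Y²) (tr(Z²) - ∑ᵢ Wᵢᵢ²)`, and Cauchy–Schwarz `(∑ᵢ dᵢ Wᵢᵢ)² ≤ tr(Y²) ∑ᵢ Wᵢᵢ²` finishes.
-/

open Finset Matrix Unitary

lemma sum_sum_sub_sq_mul_le {ι : Type*} [Fintype ι] [DecidableEq ι] (d w : ι → ℝ)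
    (t : ι → ι → ℝ) (ht : ∀ i j, 0 ≤ t i j) (htw : ∀ i, t i i = w i ^ 2) :
    ∑ i, ∑ j, (d i - d j) ^ 2 * t i j ≤
      2 * ((∑ i, d i ^ 2) * ∑ i, ∑ j, t i j - (∑ i, d i * w i) ^ 2) := by
  set S := ∑ i, d i ^ 2
  have hterm : ∀ i j,
      (d i - d j) ^ 2 * t i j ≤ 2 * S * t i j - if i = j then 2 * S * t i j else 0 := by
    intro i j
    by_cases hij : i = j
    · subst hij; simp
    · have hpair : d i ^ 2 + d j ^ 2 ≤ S := by
        rw [← sum_pair hij (f := fun k => d k ^ 2)]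
        exact sum_le_univ_sum_of_nonneg fun k => sq_nonneg (d k)
      rw [if_neg hij, sub_zero]
      exact mul_le_mul_of_nonneg_right (by nlinarith [sq_nonneg (d i + d j)]) (ht i j)
  have hCS : (∑ i, d i * w i) ^ 2 ≤ S * ∑ i, w i ^ 2 := sum_mul_sq_le_sq_mul_sq univ d w
  calc ∑ i, ∑ j, (d i - d j) ^ 2 * t i j
      ≤ ∑ i, ∑ j, (2 * S * t i j - if i = j then 2 * S * t i j else 0) :=
        sum_le_sum fun i _ => sum_le_sum fun j _ => hterm i j
    _ = 2 * S * ∑ i, ∑ j, t i j - 2 * S * ∑ i, w i ^ 2 := by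
        simp [sum_sub_distrib, mul_sum, htw]
    _ ≤ _ := by nlinarith

namespace Matrix

variable {n : Type*} [Fintype n]

lemma IsHermitian.trace_mul_self {W : Matrix n n ℂ} (hW : W.IsHermitian) :
    (W * W).trace = ↑(∑ i, ∑ j, Complex.normSq (W i j)) := by
  push_cast
  refine sum_congr rfl fun i _ => sum_congr rfl fun j _ => ?_
  beta_reduce
  rw [← hW.apply j i, Complex.star_def, Complex.mul_conj]

variable [DecidableEq n]

lemma trace_conjStarAlgAut {R : Type*} [CommRing R] [StarRing R]
    (u : unitary (Matrix n n R)) (A : Matrix n n R) :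
    (conjStarAlgAut R _ u A).trace = A.trace := by
  rw [conjStarAlgAut_apply, trace_mul_cycle, coe_star_mul_self, one_mul]

lemma trace_commutator_diagonal_sq (d : n → ℝ) {W : Matrix n n ℂ} (hW : W.IsHermitian) :
    let D := diagonal fun i => (d i : ℂ)
    ((D * W - W * D) * (D * W - W * D)).trace =
      -↑(∑ i, ∑ j, (d i - d j) ^ 2 * Complex.normSq (W i j)) := by
  intro D
  have hentry : ∀ i j, (D * W - W * D) i j = (d i - d j : ℂ) * W i j := by
    intro i j
    simp only [sub_apply, diagonal_mul, mul_diagonal, D]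
    ring
  push_cast
  rw [trace, ← sum_neg_distrib]
  refine sum_congr rfl fun i _ => ?_
  rw [diag_apply, mul_apply, ← sum_neg_distrib]
  refine sum_congr rfl fun j _ => ?_
  rw [hentry, hentry, ← hW.apply j i, Complex.star_def, ← Complex.mul_conj]
  ring

lemma IsHermitian.trace_diagonal_mul (d : n → ℝ) {W : Matrix n n ℂ} (hW : W.IsHermitian) :
    (diagonal (fun i => (d i : ℂ)) * W).trace = ↑(∑ i, d i * (W i i).re) := by
  push_cast
  refine sum_congr rfl fun i _ => ?_
  rw [diag_apply, diagonal_mul, ← hW.coe_re_apply_self i]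
  rfl

lemma trace_commutator_diagonal_sq_bounds (d : n → ℝ) {W : Matrix n n ℂ} (hW : W.IsHermitian) :
    let D := diagonal fun i => (d i : ℂ)
    ((D * W - W * D) * (D * W - W * D)).trace.im = 0 ∧
    -2 * ((D * D).trace.re * (W * W).trace.re - ((D * W).trace.re) ^ 2) ≤
      ((D * W - W * D) * (D * W - W * D)).trace.re ∧
    ((D * W - W * D) * (D * W - W * D)).trace.re ≤ 0 := by
  intro D
  have hDD : (D * D).trace = ↑(∑ i, d i ^ 2) := by simp [D, sq]
  have hdiag : ∀ i, Complex.normSq (W i i) = (W i i).re ^ 2 := fun i => by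
    rw [← hW.coe_re_apply_self i]; simp [sq]
  have key := sum_sum_sub_sq_mul_le d (fun i => (W i i).re) (fun i j => Complex.normSq (W i j))
    (fun _ _ => Complex.normSq_nonneg _) hdiag
  rw [trace_commutator_diagonal_sq d hW, hDD, hW.trace_diagonal_mul d, hW.trace_mul_self]
  simp only [Complex.neg_re, Complex.neg_im, Complex.ofReal_re, Complex.ofReal_im, neg_zero]
  refine ⟨trivial, by linarith, neg_nonpos.2 ?_⟩
  exact sum_nonneg fun i _ => sum_nonneg fun j _ =>
    mul_nonneg (sq_nonneg _) (Complex.normSq_nonneg _)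

end Matrix

theorem stmt0_general (n : ℕ) (Y Z : Matrix (Fin n) (Fin n) ℂ)
    (hY : Y.IsHermitian) (hZ : Z.IsHermitian) :
    ((Y * Z - Z * Y) * (Y * Z - Z * Y)).trace.im = 0 ∧
    -2 * ((Y * Y).trace.re * (Z * Z).trace.re - ((Y * Z).trace.re) ^ 2) ≤
      ((Y * Z - Z * Y) * (Y * Z - Z * Y)).trace.re ∧
    ((Y * Z - Z * Y) * (Y * Z - Z * Y)).trace.re ≤ 0 := by
  obtain ⟨u, d, rfl⟩ : ∃ (u : unitary (Matrix (Fin n) (Fin n) ℂ)) (d : Fin n → ℝ),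
      Y = conjStarAlgAut ℂ _ u (diagonal fun i => (d i : ℂ)) :=
    ⟨_, _, hY.spectral_theorem⟩
  obtain ⟨W, hW, rfl⟩ :
      ∃ W : Matrix (Fin n) (Fin n) ℂ, W.IsHermitian ∧ conjStarAlgAut ℂ _ u W = Z :=
    ⟨_, (hZ.isSelfAdjoint.map _).isHermitian, StarAlgEquiv.apply_symm_apply _ Z⟩
  simp only [← map_mul, ← map_sub, trace_conjStarAlgAut]
  exact trace_commutator_diagonal_sq_bounds d hW

/-- For `n ≥ 1` and Hermitian `n×n` complex matrices `Y, Z`, the trace of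
`[Y,Z]²` is real and satisfies `−2·(tr(Y²)·tr(Z²) − (tr(YZ))²) ≤ tr([Y,Z]²) ≤ 0`. -/
theorem stmt0 (n : ℕ) (hn : 1 ≤ n) (Y Z : Matrix (Fin n) (Fin n) ℂ)
    (hY : Y.IsHermitian) (hZ : Z.IsHermitian) :
    ((Y * Z - Z * Y) * (Y * Z - Z * Y)).trace.im = 0 ∧
    -2 * ((Y * Y).trace.re * (Z * Z).trace.re - ((Y * Z).trace.re) ^ 2) ≤
      ((Y * Z - Z * Y) * (Y * Z - Z * Y)).trace.re ∧
    ((Y * Z - Z * Y) * (Y * Z - Z * Y)).trace.re ≤ 0 :=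
  stmt0_general n Y Z hY hZ
end

section
/- Let n ≥ 2 and let 1 ≤ i < j ≤ n. Set Y = E_{ij} + E_{ji} and Z = E_{ii} − E_{jj}, viewed as n×n complex matrices. Then tr([Y,Z]²) = −8 and tr(Y²)·tr(Z²) − (tr(YZ))² = 4; in particular tr([Y,Z]²) = −2·(tr(Y²)·tr(Z²) − (tr(YZ))²), so the extremal sectional curvature value −1/n of SL(n,ℝ)/SO(n) (with Killing-form metric B(X,Y) = 2n·tr(XY)) is attained on the tangent plane spanned by Y and Z. -/
/-! With `Y = E_ij + E_ji` and `Z = E_ii - E_jj` one has `Y² = Z² = E_ii + E_jj` and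
`YZ = -ZY = E_ji - E_ij`, which is traceless; hence `[Y,Z] = 2(E_ji - E_ij)` and
`[Y,Z]² = -4(E_ii + E_jj)`. -/

open Matrix

namespace Matrix

variable {ι R : Type*} [Fintype ι] [DecidableEq ι] [CommRing R] {i j : ι}

theorem single_add_single_swap_mul_self (hij : i ≠ j) :
    (single i j (1 : R) + single j i 1) * (single i j 1 + single j i 1) =
      single i i 1 + single j j 1 := by
  simp [add_mul, mul_add, single_mul_single_of_ne, hij, hij.symm, add_comm]

theorem single_sub_single_diag_mul_self (hij : i ≠ j) :
    (single i i (1 : R) - single j j 1) * (single i i 1 - single j j 1) =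
      single i i 1 + single j j 1 := by
  simp [sub_mul, mul_sub, single_mul_single_of_ne, hij, hij.symm]

theorem single_sub_single_swap_mul_self (hij : i ≠ j) :
    (single j i (1 : R) - single i j 1) * (single j i 1 - single i j 1) =
      -(single i i 1 + single j j 1) := by
  simp [sub_mul, mul_sub, single_mul_single_of_ne, hij, hij.symm]
  abel

theorem single_add_single_swap_mul_diag (hij : i ≠ j) :
    (single i j (1 : R) + single j i 1) * (single i i 1 - single j j 1) =
      single j i 1 - single i j 1 := by
  simp [add_mul, mul_sub, single_mul_single_of_ne, hij, hij.symm]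

theorem single_sub_single_diag_mul_swap (hij : i ≠ j) :
    (single i i (1 : R) - single j j 1) * (single i j 1 + single j i 1) =
      -(single j i 1 - single i j 1) := by
  simp [sub_mul, mul_add, single_mul_single_of_ne, hij, hij.symm]
  abel

theorem trace_single_add_single_diag : trace (single i i (1 : R) + single j j 1) = 2 := by
  simp [one_add_one_eq_two]

theorem trace_single_sub_single_swap (hij : i ≠ j) :
    trace (single j i (1 : R) - single i j 1) = 0 := by
  simp [trace_single_eq_of_ne _ _ _ hij, trace_single_eq_of_ne _ _ _ hij.symm]

end Matrix

theorem stmt1_general (n : ℕ) (i j : Fin n) (hij : i < j)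
    (Y Z : Matrix (Fin n) (Fin n) ℂ)
    (hY : Y = Matrix.single i j 1 + Matrix.single j i 1)
    (hZ : Z = Matrix.single i i 1 - Matrix.single j j 1) :
    ((Y * Z - Z * Y) * (Y * Z - Z * Y)).trace = -8 ∧
    (Y * Y).trace * (Z * Z).trace - ((Y * Z).trace) ^ 2 = 4 ∧
    ((Y * Z - Z * Y) * (Y * Z - Z * Y)).trace =
      -2 * ((Y * Y).trace * (Z * Z).trace - ((Y * Z).trace) ^ 2) := by
  have hne := hij.ne
  have htr := trace_single_add_single_diag (R := ℂ) (i := i) (j := j)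
  have hcomm : Y * Z - Z * Y = (2 : ℂ) • (single j i 1 - single i j 1) := by
    rw [hY, hZ, single_add_single_swap_mul_diag hne, single_sub_single_diag_mul_swap hne,
      two_smul, sub_neg_eq_add]
  have hcomm_sq : ((Y * Z - Z * Y) * (Y * Z - Z * Y)).trace = -8 := by
    rw [hcomm, smul_mul_smul_comm, trace_smul, single_sub_single_swap_mul_self hne, trace_neg, htr]
    norm_num
  have hgram : (Y * Y).trace * (Z * Z).trace - ((Y * Z).trace) ^ 2 = 4 := by
    rw [hY, hZ, single_add_single_swap_mul_self hne, single_sub_single_diag_mul_self hne,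
      single_add_single_swap_mul_diag hne, trace_single_sub_single_swap hne, htr]
    norm_num
  exact ⟨hcomm_sq, hgram, by rw [hcomm_sq, hgram]; norm_num⟩

/-- For `n ≥ 2`, `i < j`, `Y = E_{ij} + E_{ji}`, `Z = E_{ii} − E_{jj}`,
one has `tr([Y,Z]²) = −8` and `tr(Y²)·tr(Z²) − (tr(YZ))² = 4`; in particular
`tr([Y,Z]²) = −2·(tr(Y²)·tr(Z²) − (tr(YZ))²)`. -/
theorem stmt1 (n : ℕ) (hn : 2 ≤ n) (i j : Fin n) (hij : i < j)
    (Y Z : Matrix (Fin n) (Fin n) ℂ)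
    (hY : Y = Matrix.single i j 1 + Matrix.single j i 1)
    (hZ : Z = Matrix.single i i 1 - Matrix.single j j 1) :
    ((Y * Z - Z * Y) * (Y * Z - Z * Y)).trace = -8 ∧
    (Y * Y).trace * (Z * Z).trace - ((Y * Z).trace) ^ 2 = 4 ∧
    ((Y * Z - Z * Y) * (Y * Z - Z * Y)).trace =
      -2 * ((Y * Y).trace * (Z * Z).trace - ((Y * Z).trace) ^ 2) :=
  stmt1_general n i j hij Y Z hY hZ
end

section
/- Let n ≥ 2 and let A be an n×n complex matrix all of whose entries vanish except possibly the entries A_{k+1,k} for 1 ≤ k ≤ n−1 and the entry A_{1,n} (a cyclic matrix). Set a_k = |A_{k+1,k}|² for 1 ≤ k ≤ n−1 and a_n = |A_{1,n}|², and read indices modulo n (so a_0 = a_n). Then tr(A·Aᴴ) = ∑_{k=1}^{n} a_k and tr([A,Aᴴ]·[A,Aᴴ]) = ∑_{k=1}^{n} (a_k − a_{k−1})². (This identity is the basis of the curvature formula K_σ = −∑_k(a_k−a_{k−1})²/(2n·(∑_k a_k)²) for cyclic Higgs bundles.) -/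
/-!
A cyclic matrix is a weighted permutation matrix, so `A * Aᴴ` and `Aᴴ * A` are both diagonal:
their `i`-th entries are `a (i - 1)` and `a i`. Hence `[A, Aᴴ]` is the diagonal matrix with entries
`a (i - 1) - a i`, and both traces are sums over the diagonal.
-/

open Matrix

namespace Matrix

variable {ι R : Type*} [Fintype ι] [DecidableEq ι] [NonUnitalNonAssocSemiring R] [StarAddMonoid R]

theorem conjTranspose_mul_self_eq_diagonal_of_support_perm (σ : Equiv.Perm ι)
    {A : Matrix ι ι R} (hA : ∀ i j, i ≠ σ j → A i j = 0) :
    Aᴴ * A = diagonal fun j => star (A (σ j) j) * A (σ j) j := by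
  ext i j
  have off_support : ∀ k ∈ Finset.univ, k ≠ σ i → Aᴴ i k * A k j = 0 := fun k _ hk => by
    rw [conjTranspose_apply, hA k i hk, star_zero, zero_mul]
  rw [mul_apply, Finset.sum_eq_single (σ i) off_support (by simp), conjTranspose_apply,
    diagonal_apply]
  split_ifs with hij
  · rw [hij]
  · rw [hA (σ i) j (fun h => hij (σ.injective h)), mul_zero]

theorem mul_conjTranspose_self_eq_diagonal_of_support_perm (σ : Equiv.Perm ι)
    {A : Matrix ι ι R} (hA : ∀ i j, i ≠ σ j → A i j = 0) :
    A * Aᴴ = diagonal fun i => A i (σ.symm i) * star (A i (σ.symm i)) := by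
  have hAH : ∀ i j, i ≠ σ.symm j → Aᴴ i j = 0 := fun i j h => by
    rw [conjTranspose_apply, hA j i (fun h' => h (σ.eq_symm_apply.mpr h'.symm)), star_zero]
  simpa using conjTranspose_mul_self_eq_diagonal_of_support_perm σ.symm hAH

end Matrix

theorem stmt3_general (n : ℕ) [NeZero n] (A : Matrix (Fin n) (Fin n) ℂ)
    (hA : ∀ i j : Fin n, i ≠ j + 1 → A i j = 0)
    (a : Fin n → ℝ) (ha : ∀ k : Fin n, a k = ‖A (k + 1) k‖ ^ 2) :
    (A * Aᴴ).trace = ((∑ k, a k : ℝ) : ℂ) ∧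
    ((A * Aᴴ - Aᴴ * A) * (A * Aᴴ - Aᴴ * A)).trace =
      ((∑ k : Fin n, (a k - a (k - 1)) ^ 2 : ℝ) : ℂ) := by
  have hAAH : A * Aᴴ = diagonal fun i => (a (i - 1) : ℂ) := by
    rw [mul_conjTranspose_self_eq_diagonal_of_support_perm (Equiv.addRight 1) hA]
    ext i j
    simp [ha, Complex.mul_conj', sub_eq_add_neg]
  have hAHA : Aᴴ * A = diagonal fun i => (a i : ℂ) := by
    rw [conjTranspose_mul_self_eq_diagonal_of_support_perm (Equiv.addRight 1) hA]
    ext i j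
    simp [ha, Complex.conj_mul']
  refine ⟨?_, ?_⟩
  · rw [hAAH, trace_diagonal, Complex.ofReal_sum]
    exact (Equiv.subRight 1).sum_comp fun i => (a i : ℂ)
  · rw [hAAH, hAHA, diagonal_sub, diagonal_mul_diagonal, trace_diagonal]
    push_cast
    exact Fintype.sum_congr _ _ fun i => by ring

/-- For a cyclic `n×n` matrix `A` (supported on positions `(k+1,k)` cyclically,
i.e. on `(k+1,k)`, `1 ≤ k ≤ n−1`, and `(1,n)`), with `a_k = |A_{k+1,k}|²` (indices mod `n`),
one has `tr(A·Aᴴ) = ∑ a_k` and `tr([A,Aᴴ]·[A,Aᴴ]) = ∑ (a_k − a_{k−1})²`. -/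
theorem stmt3 (n : ℕ) (hn : 2 ≤ n) [NeZero n] (A : Matrix (Fin n) (Fin n) ℂ)
    (hA : ∀ i j : Fin n, i ≠ j + 1 → A i j = 0)
    (a : Fin n → ℝ) (ha : ∀ k : Fin n, a k = ‖A (k + 1) k‖ ^ 2) :
    (A * Aᴴ).trace = ((∑ k, a k : ℝ) : ℂ) ∧
    ((A * Aᴴ - Aᴴ * A) * (A * Aᴴ - Aᴴ * A)).trace =
      ((∑ k : Fin n, (a k - a (k - 1)) ^ 2 : ℝ) : ℂ) :=
  stmt3_general n A hA a ha
end

section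
/- Under the hypotheses and with the definitions below, F_2 < F_3; explicitly, (1 + G_2)/(H_2)² < (1 + G_3)/((2 + H_3))². (Lemma 5.4 of the paper.) -/
/-!
Write `x = μ₂`, `g = G₃`, `h = H₃`, so that `G₂ = (1 - x)² + x²g` and `H₂ = 2 + xh`. Then
`(1 + g)(2 + xh)² - (1 + G₂)(2 + h)² = (x - 1) E(x, g, h)` for an explicit cubic `E`
(`stepDefect`), and `E > 0` as soon as `x < 2`, `3(x - 1) ≤ h` and `8g ≤ h`. The first two come
from the bound on `μ₂` together with `H₃ ≥ 2m - 3`. The third comes from the downward induction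
`((k - 1)(2m + 1 - k))² G_k ≤ (m + 1 - k)(2m + 1 - 2k)²`, which propagates because the bound on
`μ_k` reads `c_k μ_k < c_{k+1}` for `c_k = (k - 1)(2m + 1 - k)`.
-/

namespace CyclicHiggsCoefficients

theorem mul_le_of_lt_coeff_ratio {m k : ℕ} {x : ℝ} (hk : 2 ≤ k) (hkm : k ≤ m)
    (h : x < ((k : ℝ) * (((2 * m : ℕ) : ℝ) - k)) / (((k : ℝ) - 1) * (((2 * m : ℕ) : ℝ) + 1 - k))) :
    x * (((k : ℝ) - 1) * (2 * m + 1 - k)) ≤ k * (2 * m - k) := by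
  have hk' : (2 : ℝ) ≤ k := by exact_mod_cast hk
  have hkm' : (k : ℝ) ≤ m := by exact_mod_cast hkm
  push_cast at h
  exact ((lt_div_iff₀ (mul_pos (by linarith) (by linarith))).1 h).le

section Recursion

variable {m : ℕ} {μ G H : ℕ → ℝ}

theorem nonneg_of_sq_recursion (hGtop : G (m + 1) = 0)
    (hG : ∀ k, 2 ≤ k → k ≤ m → G k = (1 - μ k) ^ 2 + μ k ^ 2 * G (k + 1))
    {k : ℕ} (hk : 2 ≤ k) (hkm : k ≤ m + 1) : 0 ≤ G k := by
  refine Nat.decreasingInduction' (P := fun k => 0 ≤ G k) (fun j hj hkj ih => ?_) hkm hGtop.ge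
  rw [hG j (hk.trans hkj) (Nat.lt_succ_iff.1 hj)]
  positivity

theorem ge_of_affine_recursion (hμ : ∀ k, 2 ≤ k → k ≤ m → 1 ≤ μ k) (hHtop : H (m + 1) = 1)
    (hH : ∀ k, 2 ≤ k → k ≤ m → H k = 2 + μ k * H (k + 1))
    {k : ℕ} (hk : 2 ≤ k) (hkm : k ≤ m + 1) : 2 * ((m : ℝ) + 1 - k) + 1 ≤ H k := by
  refine Nat.decreasingInduction' (P := fun k => 2 * ((m : ℝ) + 1 - k) + 1 ≤ H k)
    (fun j hj hkj ih => ?_) hkm (by simp [hHtop])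
  have hj2 : 2 ≤ j := hk.trans hkj
  have hjm : j ≤ m := Nat.lt_succ_iff.1 hj
  have hjm' : (j : ℝ) + 1 ≤ m + 1 := by exact_mod_cast Nat.succ_le_succ hjm
  simp only [Nat.cast_add, Nat.cast_one] at ih
  rw [hH j hj2 hjm]
  nlinarith [hμ j hj2 hjm]

theorem weighted_bound_of_sq_recursion
    (hμ : ∀ k, 2 ≤ k → k ≤ m →
      1 ≤ μ k ∧ μ k * (((k : ℝ) - 1) * (2 * m + 1 - k)) ≤ k * (2 * m - k))
    (hGtop : G (m + 1) = 0)
    (hG : ∀ k, 2 ≤ k → k ≤ m → G k = (1 - μ k) ^ 2 + μ k ^ 2 * G (k + 1))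
    {k : ℕ} (hk : 2 ≤ k) (hkm : k ≤ m + 1) :
    (((k : ℝ) - 1) * (2 * m + 1 - k)) ^ 2 * G k ≤ ((m : ℝ) + 1 - k) * (2 * m + 1 - 2 * k) ^ 2 := by
  refine Nat.decreasingInduction'
    (P := fun k => (((k : ℝ) - 1) * (2 * m + 1 - k)) ^ 2 * G k
      ≤ ((m : ℝ) + 1 - k) * (2 * m + 1 - 2 * k) ^ 2)
    (fun j hj hkj ih => ?_) hkm (by simp [hGtop])
  have hj2 : 2 ≤ j := hk.trans hkj
  have hjm : j ≤ m := Nat.lt_succ_iff.1 hj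
  have hj2' : (2 : ℝ) ≤ j := by exact_mod_cast hj2
  have hjm' : (j : ℝ) ≤ m := by exact_mod_cast hjm
  obtain ⟨hμ1, hμc⟩ := hμ j hj2 hjm
  have hGnext : 0 ≤ G (j + 1) := nonneg_of_sq_recursion hGtop hG (by omega) (by omega)
  have ih' : ((j : ℝ) * (2 * m - j)) ^ 2 * G (j + 1)
      ≤ ((m : ℝ) - j) * (2 * m + 1 - 2 * (j + 1)) ^ 2 := by
    convert ih using 2 <;> push_cast <;> ring
  set c := ((j : ℝ) - 1) * (2 * m + 1 - j)
  set d := 2 * (m : ℝ) + 1 - 2 * j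
  have hc : 0 ≤ c := mul_nonneg (by linarith) (by linarith)
  have hd : 1 ≤ d := by linarith
  -- `c (μ - 1) ≤ j (2m - j) - c = d`
  have hlin : (c * (1 - μ j)) ^ 2 ≤ d ^ 2 := by
    have h0 : 0 ≤ c * (μ j - 1) := mul_nonneg hc (by linarith)
    have h1 : c * (μ j - 1) ≤ d := by linarith
    nlinarith
  have hquad : (c * μ j) ^ 2 * G (j + 1) ≤ ((j : ℝ) * (2 * m - j)) ^ 2 * G (j + 1) := by
    have hcμ : 0 ≤ c * μ j := mul_nonneg hc (by linarith)
    exact mul_le_mul_of_nonneg_right (pow_le_pow_left₀ hcμ (by linarith) 2) hGnext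
  have htail : (2 * (m : ℝ) + 1 - 2 * (j + 1)) ^ 2 ≤ d ^ 2 := by nlinarith
  rw [hG j hj2 hjm]
  calc c ^ 2 * ((1 - μ j) ^ 2 + μ j ^ 2 * G (j + 1))
      = (c * (1 - μ j)) ^ 2 + (c * μ j) ^ 2 * G (j + 1) := by ring
    _ ≤ d ^ 2 + ((m : ℝ) - j) * d ^ 2 := by
        have := mul_le_mul_of_nonneg_left htail (sub_nonneg.2 hjm')
        linarith
    _ = ((m : ℝ) + 1 - j) * d ^ 2 := by ring

end Recursion

def stepDefect (x g h : ℝ) : ℝ :=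
  2 * h ^ 2 + 4 * h * (2 - x) - 4 * x * g * h - 4 * (x - 1) - 4 * (x + 1) * g

theorem stepDefect_pos {x g h : ℝ} (hx1 : 1 < x) (hx2 : x < 2) (hg : 0 ≤ g) (hgh : 8 * g ≤ h)
    (hxh : 3 * (x - 1) ≤ h) : 0 < stepDefect x g h := by
  unfold stepDefect
  have hh : 0 < h := by linarith
  nlinarith [mul_nonneg (sub_nonneg.2 hgh) hh.le, mul_nonneg (mul_nonneg hg hh.le) (sub_pos.2 hx2).le,
    mul_pos hh (sub_pos.2 hx2), mul_nonneg hh.le (sub_nonneg.2 hxh)]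

theorem div_sq_lt_div_sq {x g h : ℝ} (hx : 1 < x) (hh : 0 < h) (hE : 0 < stepDefect x g h) :
    (1 + ((1 - x) ^ 2 + x ^ 2 * g)) / (2 + x * h) ^ 2 < (1 + g) / (2 + h) ^ 2 := by
  have hxh : 0 < x * h := by positivity
  rw [div_lt_div_iff₀ (by positivity) (by positivity)]
  have key : (1 + g) * (2 + x * h) ^ 2 - (1 + ((1 - x) ^ 2 + x ^ 2 * g)) * (2 + h) ^ 2
      = (x - 1) * stepDefect x g h := by unfold stepDefect; ring
  nlinarith [mul_pos (sub_pos.2 hx) hE]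

end CyclicHiggsCoefficients

open CyclicHiggsCoefficients in
/-- Lemma 5.4: with `n = 2m`, `1 < μ_k < k(n−k)/((k−1)(n+1−k))`,
`G_{m+1} = 0`, `H_{m+1} = 1`, `G_k = (1−μ_k)² + μ_k²G_{k+1}`, `H_k = 2 + μ_kH_{k+1}`,
`F_k = (1+G_k)/((2(k−2)+H_k)²)`, one has `F_2 < F_3`. -/
theorem stmt6 (m : ℕ) (hm : 2 ≤ m) (n : ℕ) (hn : n = 2 * m)
    (μ G H F : ℕ → ℝ)
    (hμ : ∀ k, 2 ≤ k → k ≤ m → 1 < μ k ∧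
      μ k < ((k : ℝ) * ((n : ℝ) - k)) / (((k : ℝ) - 1) * ((n : ℝ) + 1 - k)))
    (hGtop : G (m + 1) = 0) (hHtop : H (m + 1) = 1)
    (hG : ∀ k, 2 ≤ k → k ≤ m → G k = (1 - μ k) ^ 2 + (μ k) ^ 2 * G (k + 1))
    (hH : ∀ k, 2 ≤ k → k ≤ m → H k = 2 + μ k * H (k + 1))
    (hF : ∀ k, 2 ≤ k → k ≤ m + 1 → F k = (1 + G k) / (2 * ((k : ℝ) - 2) + H k) ^ 2) :
    F 2 < F 3 := by
  subst hn
  have hm' : (2 : ℝ) ≤ m := by exact_mod_cast hm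
  have hμ' : ∀ k, 2 ≤ k → k ≤ m →
      1 ≤ μ k ∧ μ k * (((k : ℝ) - 1) * (2 * m + 1 - k)) ≤ k * (2 * m - k) := fun k hk hkm =>
    ⟨(hμ k hk hkm).1.le, mul_le_of_lt_coeff_ratio hk hkm (hμ k hk hkm).2⟩
  have hG3 : 0 ≤ G 3 := nonneg_of_sq_recursion hGtop hG (by norm_num) (by omega)
  have hH3 : 2 * (m : ℝ) - 3 ≤ H 3 := by
    have := ge_of_affine_recursion (fun k hk hkm => (hμ' k hk hkm).1) hHtop hH
      (k := 3) (by norm_num) (by omega)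
    push_cast at this
    linarith
  have hGH : 8 * G 3 ≤ H 3 := by
    have := weighted_bound_of_sq_recursion hμ' hGtop hG (k := 3) (by norm_num) (by omega)
    push_cast at this
    nlinarith [sq_nonneg ((m : ℝ) - 7 / 4)]
  have hx1 : 1 < μ 2 := (hμ 2 le_rfl hm).1
  have hx2 : μ 2 * (2 * m - 1) ≤ 2 * (2 * m - 2) := by
    have := (hμ' 2 le_rfl hm).2
    norm_num at this
    linarith
  have hx2_lt : μ 2 < 2 := by nlinarith
  have hx2_H : 3 * (μ 2 - 1) ≤ H 3 := by nlinarith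
  rw [hF 2 le_rfl (by omega), hF 3 (by norm_num) (by omega), hG 2 le_rfl hm, hH 2 le_rfl hm]
  norm_num
  exact div_sq_lt_div_sq hx1 (by linarith)
    (stepDefect_pos hx1 hx2_lt hG3 hGH hx2_H)
end

section
/- Under the hypotheses and with the definitions below, F_k < F_{k+1} for every integer k with 3 ≤ k ≤ m. (Lemma 5.5 of the paper.) -/
set_option maxHeartbeats 1000000

private lemma stmt7_hup_step (Mr J x B : ℝ) (hJ2 : 2 ≤ J) (hJM : J ≤ Mr)
    (hub : x * ((J-1)*(2*Mr+1-J)) < J*(2*Mr-J)) (hB : 0 ≤ B)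
    (hBU : B * (J*(2*Mr-J)) ≤ Mr^2*(2*(Mr-J)+1)) :
    (2 + x*B) * ((J-1)*(2*Mr+1-J)) ≤ Mr^2*(2*(Mr+1-J)+1) := by
  have e1 : x * ((J-1)*(2*Mr+1-J)) * B ≤ (J*(2*Mr-J)) * B :=
    mul_le_mul_of_nonneg_right hub.le hB
  nlinarith [e1, hBU, sq_nonneg (Mr-J+1)]

private lemma stmt7_core (Mr J x A B : ℝ) (hJ3 : 3 ≤ J) (hJM : J ≤ Mr)
    (hx1 : 1 < x) (hub : x * ((J-1)*(2*Mr+1-J)) < J*(2*Mr-J))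
    (hA : 0 ≤ A) (hB : 1 ≤ B)
    (hBU : B * (J*(2*Mr-J)) ≤ Mr^2*(2*(Mr-J)+1))
    (hPhi : (1+A)*(2*Mr-1)^2 ≤ (2*J-2+B)^2) :
    (1 + ((1-x)^2 + x^2*A)) * (2*J-2+B)^2 < (1+A) * (2*J-2+x*B)^2 := by
  have ha : (0:ℝ) ≤ J - 3 := by linarith
  have hb : (0:ℝ) ≤ Mr - J := by linarith
  have hcpos : (0:ℝ) < 2*J-2 := by linarith
  have hden : (0:ℝ) < (J-1)*(2*Mr+1-J) := by nlinarith
  have hJpos : (0:ℝ) < J*(2*Mr-J) := by nlinarith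
  have hBpos : (0:ℝ) < B := by linarith
  have h4 : (2*J-2) * ((2*J-2)*((J-1)*(2*Mr+1-J))
        + (2*J-2)*(J*(2*Mr-J)) + 2*Mr^2*(2*(Mr-J)+1)) ≤
      2*((J-1)*(2*Mr+1-J))*(2*Mr-1)^2 := by
    linarith [ha, hb, mul_nonneg ha hb, mul_nonneg hb hb,
      mul_nonneg (mul_nonneg hb hb) hb, mul_nonneg ha (mul_nonneg hb hb),
      mul_nonneg (mul_nonneg ha hb) (mul_nonneg hb hb), mul_nonneg ha ha,
      mul_nonneg (mul_nonneg ha ha) hb, mul_nonneg (mul_nonneg ha ha) (mul_nonneg hb hb),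
      mul_nonneg (mul_nonneg ha ha) ha, mul_nonneg (mul_nonneg (mul_nonneg ha ha) ha) hb]
  have h3 : (2*J-2) * ((2*J-2)*((J-1)*(2*Mr+1-J))
        + ((2*J-2)+2*B)*(J*(2*Mr-J))) ≤
      2*((J-1)*(2*Mr+1-J))*(2*Mr-1)^2 := by
    have e := mul_le_mul_of_nonneg_left hBU (by linarith : (0:ℝ) ≤ 2*(2*J-2))
    nlinarith [h4, e]
  have ht1 : (0:ℝ) < (2*J-2)*((J-1)*(2*Mr+1-J)) + ((2*J-2)+2*B)*(J*(2*Mr-J)) := by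
    nlinarith [mul_pos hcpos hden, mul_pos hcpos hJpos, mul_pos hJpos hBpos]
  have hX : (0:ℝ) ≤ (2*J-2) * ((2*J-2)*((J-1)*(2*Mr+1-J))
        + ((2*J-2)+2*B)*(J*(2*Mr-J))) := (mul_pos hcpos ht1).le
  have e1 := mul_le_mul_of_nonneg_right hPhi hX
  have e2 := mul_le_mul_of_nonneg_left h3 (sq_nonneg (2*J-2+B))
  have h2m : (0:ℝ) < (2*Mr-1)^2 := pow_pos (by linarith) 2
  have e4 : ((1+A) * ((2*J-2) * ((2*J-2)*((J-1)*(2*Mr+1-J))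
        + ((2*J-2)+2*B)*(J*(2*Mr-J))))) * (2*Mr-1)^2 ≤
      (2*(2*J-2+B)^2*((J-1)*(2*Mr+1-J))) * (2*Mr-1)^2 := by linarith [e1, e2]
  have target2 : (1+A) * ((2*J-2) * ((2*J-2)*((J-1)*(2*Mr+1-J))
        + ((2*J-2)+2*B)*(J*(2*Mr-J)))) ≤
      2*(2*J-2+B)^2*((J-1)*(2*Mr+1-J)) := le_of_mul_le_mul_right e4 h2m
  have hApos : (0:ℝ) < 1 + A := by linarith
  have e3 := mul_lt_mul_of_pos_left hub
    (mul_pos hApos (mul_pos hcpos (by linarith : (0:ℝ) < (2*J-2)+2*B)))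
  have hRDk : (0:ℝ) < (2*(2*J-2+B)^2 - (1+A)*(2*J-2)^2
      - (1+A)*(2*J-2)*((2*J-2)+2*B)*x) * ((J-1)*(2*Mr+1-J)) := by
    linarith [target2, e3]
  have hR : (0:ℝ) < 2*(2*J-2+B)^2 - (1+A)*(2*J-2)^2
      - (1+A)*(2*J-2)*((2*J-2)+2*B)*x := by
    rcases mul_pos_iff.mp hRDk with ⟨h, -⟩ | ⟨-, h⟩
    · exact h
    · linarith
  linarith [mul_pos (by linarith : (0:ℝ) < x - 1) hR]

/-- Lemma 5.5: with `n = 2m`, `1 < μ_k < k(n−k)/((k−1)(n+1−k))`,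
`G_{m+1} = 0`, `H_{m+1} = 1`, `G_k = (1−μ_k)² + μ_k²G_{k+1}`, `H_k = 2 + μ_kH_{k+1}`,
`F_k = (1+G_k)/((2(k−2)+H_k)²)`, one has `F_k < F_{k+1}` for all `3 ≤ k ≤ m`. -/
theorem stmt7 (m : ℕ) (hm : 2 ≤ m) (n : ℕ) (hn : n = 2 * m)
    (μ G H F : ℕ → ℝ)
    (hμ : ∀ k, 2 ≤ k → k ≤ m → 1 < μ k ∧
      μ k < ((k : ℝ) * ((n : ℝ) - k)) / (((k : ℝ) - 1) * ((n : ℝ) + 1 - k)))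
    (hGtop : G (m + 1) = 0) (hHtop : H (m + 1) = 1)
    (hG : ∀ k, 2 ≤ k → k ≤ m → G k = (1 - μ k) ^ 2 + (μ k) ^ 2 * G (k + 1))
    (hH : ∀ k, 2 ≤ k → k ≤ m → H k = 2 + μ k * H (k + 1))
    (hF : ∀ k, 2 ≤ k → k ≤ m + 1 → F k = (1 + G k) / (2 * ((k : ℝ) - 2) + H k) ^ 2) :
    ∀ k, 3 ≤ k → k ≤ m → F k < F (k + 1) := by
  have hM : (2:ℝ) ≤ (m:ℝ) := by exact_mod_cast hm
  have hnR : (n:ℝ) = 2*(m:ℝ) := by rw [hn]; push_cast; ring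
  -- bundle: G ≥ 0, H ≥ 1, and the key upper bound on H
  have bundle : ∀ d j : ℕ, 2 ≤ j → j + d = m + 1 →
      0 ≤ G j ∧ 1 ≤ H j ∧
      H j * (((j:ℝ)-1)*(2*(m:ℝ)+1-(j:ℝ))) ≤ (m:ℝ)^2*(2*((m:ℝ)+1-(j:ℝ))+1) := by
    intro d
    induction d with
    | zero =>
      intro j hj2 hj
      have hjm : j = m + 1 := by omega
      subst hjm
      have hc : ((m+1 : ℕ):ℝ) = (m:ℝ)+1 := by push_cast; ring
      rw [hGtop, hHtop, hc]
      refine ⟨le_refl 0, le_refl 1, ?_⟩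
      nlinarith [hM]
    | succ d ih =>
      intro j hj2 hj
      have hjm : j ≤ m := by omega
      obtain ⟨iG, iH, iU⟩ := ih (j+1) (by omega) (by omega)
      have hcast : ((j+1:ℕ):ℝ) = (j:ℝ)+1 := by push_cast; ring
      rw [hcast] at iU
      have hmu := hμ j hj2 hjm
      have hj2R : (2:ℝ) ≤ (j:ℝ) := by exact_mod_cast hj2
      have hjmR : (j:ℝ) ≤ (m:ℝ) := by exact_mod_cast hjm
      have hden : (0:ℝ) < ((j:ℝ)-1)*(2*(m:ℝ)+1-(j:ℝ)) := by nlinarith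
      have hub : μ j * (((j:ℝ)-1)*(2*(m:ℝ)+1-(j:ℝ))) < (j:ℝ)*(2*(m:ℝ)-(j:ℝ)) := by
        have h2 := hmu.2
        rw [hnR] at h2
        exact (lt_div_iff₀ hden).mp h2
      rw [hG j hj2 hjm, hH j hj2 hjm]
      refine ⟨?_, ?_, ?_⟩
      · nlinarith [sq_nonneg (1 - μ j), mul_nonneg (sq_nonneg (μ j)) iG]
      · nlinarith [hmu.1, iH]
      · have hBU : H (j+1) * ((j:ℝ)*(2*(m:ℝ)-(j:ℝ))) ≤
            (m:ℝ)^2*(2*((m:ℝ)-(j:ℝ))+1) := by linarith [iU]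
        exact stmt7_hup_step (m:ℝ) (j:ℝ) (μ j) (H (j+1)) hj2R hjmR hub
          (by linarith) hBU
  -- the core step
  have step : ∀ j : ℕ, 3 ≤ j → j ≤ m →
      (1 + G (j+1)) * (2*(m:ℝ)-1)^2 ≤ (2*(((j+1:ℕ):ℝ)-2) + H (j+1))^2 →
      F j < F (j+1) := by
    intro j hj3 hjm hPhi
    have hj2 : 2 ≤ j := by omega
    obtain ⟨iG, iH, iU⟩ := bundle (m - j) (j+1) (by omega) (by omega)
    have hcast : ((j+1:ℕ):ℝ) = (j:ℝ)+1 := by push_cast; ring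
    rw [hcast] at iU hPhi
    have hmu := hμ j hj2 hjm
    have hj3R : (3:ℝ) ≤ (j:ℝ) := by exact_mod_cast hj3
    have hjmR : (j:ℝ) ≤ (m:ℝ) := by exact_mod_cast hjm
    have hden : (0:ℝ) < ((j:ℝ)-1)*(2*(m:ℝ)+1-(j:ℝ)) := by nlinarith
    have hub : μ j * (((j:ℝ)-1)*(2*(m:ℝ)+1-(j:ℝ))) < (j:ℝ)*(2*(m:ℝ)-(j:ℝ)) := by
      have h2 := hmu.2
      rw [hnR] at h2
      exact (lt_div_iff₀ hden).mp h2
    have hBU : H (j+1) * ((j:ℝ)*(2*(m:ℝ)-(j:ℝ))) ≤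
        (m:ℝ)^2*(2*((m:ℝ)-(j:ℝ))+1) := by linarith [iU]
    have hPhi' : (1 + G (j+1))*(2*(m:ℝ)-1)^2 ≤ (2*(j:ℝ)-2 + H (j+1))^2 := by
      nlinarith [hPhi]
    have hcore := stmt7_core (m:ℝ) (j:ℝ) (μ j) (G (j+1)) (H (j+1))
      hj3R hjmR hmu.1 hub iG iH hBU hPhi'
    have hBpos : (0:ℝ) < H (j+1) := by linarith
    have hd1 : (0:ℝ) < 2*((j:ℝ)-2) + (2 + μ j * H (j+1)) := by
      nlinarith [mul_pos (by linarith : (0:ℝ) < μ j) hBpos]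
    have hd2 : (0:ℝ) < 2*(((j:ℝ)+1)-2) + H (j+1) := by linarith
    rw [hF j (by omega) (by omega), hF (j+1) (by omega) (by omega),
      hG j hj2 hjm, hH j hj2 hjm, hcast,
      div_lt_div_iff₀ (pow_pos hd1 2) (pow_pos hd2 2)]
    nlinarith [hcore]
  -- Φ by downward induction
  have phi : ∀ d j : ℕ, 3 ≤ j → j + d = m + 1 →
      (1 + G j) * (2*(m:ℝ)-1)^2 ≤ (2*((j:ℝ)-2) + H j)^2 := by
    intro d
    induction d with
    | zero =>
      intro j hj3 hj
      have hjm : j = m + 1 := by omega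
      subst hjm
      have hc : ((m+1 : ℕ):ℝ) = (m:ℝ)+1 := by push_cast; ring
      rw [hGtop, hHtop, hc]
      nlinarith [hM]
    | succ d ih =>
      intro j hj3 hj
      have hjm : j ≤ m := by omega
      have iPhi := ih (j+1) (by omega) (by omega)
      have hFlt := step j hj3 hjm iPhi
      have hcast : ((j+1:ℕ):ℝ) = (j:ℝ)+1 := by push_cast; ring
      rw [hcast] at iPhi
      obtain ⟨jG, jH, -⟩ := bundle (m + 1 - j) j (by omega) (by omega)
      obtain ⟨jG1, jH1, -⟩ := bundle (m - j) (j+1) (by omega) (by omega)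
      have hj3R : (3:ℝ) ≤ (j:ℝ) := by exact_mod_cast hj3
      have hdj : (0:ℝ) < 2*((j:ℝ)-2) + H j := by linarith
      have hdj1 : (0:ℝ) < 2*(((j:ℝ)+1)-2) + H (j+1) := by linarith
      have h2m1 : (0:ℝ) < 2*(m:ℝ)-1 := by linarith
      have hFj : F j = (1+G j)/(2*((j:ℝ)-2)+H j)^2 := hF j (by omega) (by omega)
      have hFj1 : F (j+1) = (1+G (j+1))/(2*(((j:ℝ)+1)-2)+H (j+1))^2 := by
        rw [hF (j+1) (by omega) (by omega), hcast]
      have hFup : F (j+1) * (2*(m:ℝ)-1)^2 ≤ 1 := by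
        rw [hFj1, div_mul_eq_mul_div, div_le_one (pow_pos hdj1 2)]
        exact iPhi
      have hG1 : 1 + G j = F j * (2*((j:ℝ)-2)+H j)^2 := by
        rw [hFj]
        field_simp
      rw [hG1]
      nlinarith [hFlt, hFup, mul_pos (pow_pos h2m1 2) (pow_pos hdj 2),
        sq_nonneg (2*((j:ℝ)-2)+H j), pow_pos h2m1 2]
  intro k hk3 hkm
  exact step k hk3 hkm (phi (m - k) (k+1) (by omega) (by omega))
end

section
/- Under the hypotheses and with the definitions below, F_2 < 1/(n−1)²; explicitly, (n−1)²·(1 + (1−μ_2)² + ∑_{k=3}^{m} (1−μ_k)²·μ_2²⋯μ_{k−1}²) < (2 + 2μ_2 + 2μ_2μ_3 + ⋯ + 2μ_2⋯μ_{m−1} + μ_2⋯μ_m)². (This is the algebraic core of the lower bound K_σ ≥ −1/(n(n−1)²) on the extrinsic curvature of the minimal immersion associated to a cyclic Higgs bundle in the SL(n,ℝ) Hitchin component, Theorem 1.4, for even n.) -/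
noncomputable def stmt8hmu (m k : ℝ) : ℝ := k * (2*m - k) / ((k - 1) * (2*m + 1 - k))
noncomputable def stmt8hH (m k : ℝ) : ℝ :=
  ((m-1)*m*(4*m+1)/3 - (k-2)*(k-1)*(6*m-2*k+3)/3 + m^2) / ((k - 1) * (2*m + 1 - k))

lemma stmt8poly (a b : ℝ) (ha : 0 ≤ a) (hb : 0 ≤ b) : (0:ℝ) ≤
      20 + (284/3)*b + (464/3)*b^2 + (304/3)*b^3 + (64/3)*b^4
      + 68*a + (862/3)*(a*b) + 400*(a*b^2) + (632/3)*(a*b^3) + 32*(a*b^4)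
      + 89*a^2 + (988/3)*(a^2*b) + (1108/3)*(a^2*b^2) + (416/3)*(a^2*b^3) + (32/3)*(a^2*b^4)
      + 56*a^3 + (530/3)*(a^3*b) + 144*(a^3*b^2) + (88/3)*(a^3*b^3)
      + 17*a^4 + 44*(a^4*b) + 20*(a^4*b^2)
      + 2*a^5 + 4*(a^5*b) := by
    have h01 : (0:ℝ) ≤ b^2 := sq_nonneg b
    have h02 : (0:ℝ) ≤ b^3 := by positivity
    have h03 : (0:ℝ) ≤ b^4 := by positivity
    have h2 : (0:ℝ) ≤ a^2 := sq_nonneg a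
    have h30 : (0:ℝ) ≤ a^3 := by positivity
    have h40 : (0:ℝ) ≤ a^4 := by positivity
    have h50 : (0:ℝ) ≤ a^5 := by positivity
    have h10 : (0:ℝ) ≤ a*b := mul_nonneg ha hb
    have h11 : (0:ℝ) ≤ a*b^2 := mul_nonneg ha h01
    have h12 : (0:ℝ) ≤ a*b^3 := mul_nonneg ha h02
    have h13 : (0:ℝ) ≤ a*b^4 := mul_nonneg ha h03
    have h20 : (0:ℝ) ≤ a^2*b := mul_nonneg h2 hb
    have h21 : (0:ℝ) ≤ a^2*b^2 := mul_nonneg h2 h01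
    have h22 : (0:ℝ) ≤ a^2*b^3 := mul_nonneg h2 h02
    have h23 : (0:ℝ) ≤ a^2*b^4 := mul_nonneg h2 h03
    have h31 : (0:ℝ) ≤ a^3*b := mul_nonneg h30 hb
    have h32 : (0:ℝ) ≤ a^3*b^2 := mul_nonneg h30 h01
    have h33 : (0:ℝ) ≤ a^3*b^3 := mul_nonneg h30 h02
    have h41 : (0:ℝ) ≤ a^4*b := mul_nonneg h40 hb
    have h42 : (0:ℝ) ≤ a^4*b^2 := mul_nonneg h40 h01
    have h51 : (0:ℝ) ≤ a^5*b := mul_nonneg h50 hb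
    linarith

lemma stmt8key (m k : ℝ) (hm : 2 ≤ m) (hk : 2 ≤ k) (hkm : k ≤ m) :
    2*(k-1)^2*(stmt8hmu m k + 1) + 2*(k-1)*(stmt8hmu m k)*(stmt8hH m (k+1))
      ≤ (2*m-1)^2 := by
  have p1 : (0:ℝ) < k - 1 := by linarith
  have p2 : (0:ℝ) < 2*m + 1 - k := by linarith
  have p3 : (0:ℝ) < k + 1 - 1 := by linarith
  have p4 : (0:ℝ) < 2*m + 1 - (k+1) := by linarith
  have hP := stmt8poly (k-2) (m-k) (by linarith) (by linarith)
  have hD : (0:ℝ) < ((k-1) * (2*m+1-k)) * ((k+1-1) * (2*m+1-(k+1))) := by positivity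
  have hdiff : ((2*m-1)^2 -
      (2*(k-1)^2*(stmt8hmu m k + 1) + 2*(k-1)*(stmt8hmu m k)*(stmt8hH m (k+1))))
      * (((k-1) * (2*m+1-k)) * ((k+1-1) * (2*m+1-(k+1))))
      = 20 + (284/3)*(m-k) + (464/3)*(m-k)^2 + (304/3)*(m-k)^3 + (64/3)*(m-k)^4
      + 68*(k-2) + (862/3)*((k-2)*(m-k)) + 400*((k-2)*(m-k)^2) + (632/3)*((k-2)*(m-k)^3) + 32*((k-2)*(m-k)^4)
      + 89*(k-2)^2 + (988/3)*((k-2)^2*(m-k)) + (1108/3)*((k-2)^2*(m-k)^2) + (416/3)*((k-2)^2*(m-k)^3) + (32/3)*((k-2)^2*(m-k)^4)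
      + 56*(k-2)^3 + (530/3)*((k-2)^3*(m-k)) + 144*((k-2)^3*(m-k)^2) + (88/3)*((k-2)^3*(m-k)^3)
      + 17*(k-2)^4 + 44*((k-2)^4*(m-k)) + 20*((k-2)^4*(m-k)^2)
      + 2*(k-2)^5 + 4*((k-2)^5*(m-k)) := by
    have d1 : (k - 1) * (2*m + 1 - k) ≠ 0 := by positivity
    have d2 : (k + 1 - 1) * (2*m + 1 - (k+1)) ≠ 0 := by positivity
    have emu : stmt8hmu m k * ((k - 1) * (2*m + 1 - k)) = k * (2*m - k) := by
      unfold stmt8hmu; exact div_mul_cancel₀ _ d1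
    have ehH : stmt8hH m (k+1) * ((k + 1 - 1) * (2*m + 1 - (k+1)))
        = ((m-1)*m*(4*m+1)/3 - ((k+1)-2)*((k+1)-1)*(6*m-2*(k+1)+3)/3 + m^2) := by
      unfold stmt8hH; exact div_mul_cancel₀ _ d2
    linear_combination (-2*(k-1)^2*((k+1-1)*(2*m+1-(k+1)))
        - 2*(k-1)*(stmt8hH m (k+1))*((k+1-1)*(2*m+1-(k+1))))*emu
      + (-2*(k-1)*(k*(2*m-k)))*ehH
  have h0 : 0 ≤ (2*m-1)^2 -
      (2*(k-1)^2*(stmt8hmu m k + 1) + 2*(k-1)*(stmt8hmu m k)*(stmt8hH m (k+1))) := by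
    by_contra hneg
    push_neg at hneg
    have hlt := mul_neg_of_neg_of_pos (show ((2*m-1)^2 -
      (2*(k-1)^2*(stmt8hmu m k + 1) + 2*(k-1)*(stmt8hmu m k)*(stmt8hH m (k+1)))) < 0 from hneg) hD
    rw [hdiff] at hlt
    linarith
  linarith

lemma stmt8hH_top (m : ℝ) (hm : 2 ≤ m) : stmt8hH m (m+1) = 1 := by
  unfold stmt8hH
  have h1 : (0:ℝ) < (m + 1 - 1) * (2*m + 1 - (m+1)) := by nlinarith
  rw [div_eq_one_iff_eq (ne_of_gt h1)]
  ring

lemma stmt8hH_id (m k : ℝ) (hm : 2 ≤ m) (hk : 2 ≤ k) (hkm : k ≤ m) :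
    stmt8hH m k = 2 + stmt8hmu m k * stmt8hH m (k+1) := by
  have p1 : (0:ℝ) < k - 1 := by linarith
  have p2 : (0:ℝ) < 2*m + 1 - k := by linarith
  have p3 : (0:ℝ) < k + 1 - 1 := by linarith
  have p4 : (0:ℝ) < 2*m + 1 - (k+1) := by linarith
  have d1 : (k - 1) * (2*m + 1 - k) ≠ 0 := by positivity
  unfold stmt8hH stmt8hmu
  rw [div_mul_div_comm, add_div' _ _ _ (by positivity), div_eq_div_iff d1 (by positivity)]
  ring


lemma stmt8step (c g h hh mm mu a : ℝ)
    (h1 : c^2 * (1+g) ≤ (a+h)^2)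
    (h2 : 1 < mu) (h3 : mu < mm) (h4 : 1 ≤ h) (h5 : h ≤ hh)
    (h6 : 0 < a) (h7 : a*((mm+1)*a + 2*mm*hh) ≤ 2*c^2) :
    c^2 * (1 + ((1-mu)^2 + mu^2*g)) < (a + mu*h)^2 := by
  have hh1 : (1:ℝ) ≤ hh := le_trans h4 h5
  have hstep : a*((mu+1)*a + 2*mu*h) < 2*c^2 := by
    have e1 : a*((mu+1)*a + 2*mu*h) ≤ a*((mu+1)*a + 2*mu*hh) := by
      have := mul_nonneg (mul_nonneg (le_of_lt h6) (show (0:ℝ) ≤ 2*mu by linarith))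
        (show (0:ℝ) ≤ hh - h by linarith)
      nlinarith [this]
    have e2 : a*((mu+1)*a + 2*mu*hh) < a*((mm+1)*a + 2*mm*hh) := by
      have := mul_pos (mul_pos h6 (show (0:ℝ) < mm - mu by linarith))
        (show (0:ℝ) < a + 2*hh by linarith)
      nlinarith [this]
    linarith
  have e4 : c^2 * (1 + ((1-mu)^2 + mu^2*g)) = c^2*(2 - 2*mu) + mu^2 * (c^2 * (1+g)) := by
    ring
  have e5 : mu^2 * (c^2*(1+g)) ≤ mu^2 * (a+h)^2 :=
    mul_le_mul_of_nonneg_left h1 (sq_nonneg _)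
  have e6 : (a + mu*h)^2 - (c^2*(2 - 2*mu) + mu^2*(a+h)^2)
      = (mu - 1) * (2*c^2 - a*((mu+1)*a + 2*mu*h)) := by ring
  have e7 : 0 < (mu - 1) * (2*c^2 - a*((mu+1)*a + 2*mu*h)) :=
    mul_pos (by linarith) (by linarith)
  linarith

/-- with `n = 2m`, `1 < μ_k < k(n−k)/((k−1)(n+1−k))`,
`G_{m+1} = 0`, `H_{m+1} = 1`, `G_k = (1−μ_k)² + μ_k²G_{k+1}`, `H_k = 2 + μ_kH_{k+1}`,
`F_k = (1+G_k)/((2(k−2)+H_k)²)`, one has `F_2 < 1/(n−1)²` (the algebraic core of the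
lower bound `K_σ ≥ −1/(n(n−1)²)` in Theorem 1.4 for even `n`). -/
theorem stmt8 (m : ℕ) (hm : 2 ≤ m) (n : ℕ) (hn : n = 2 * m)
    (μ G H F : ℕ → ℝ)
    (hμ : ∀ k, 2 ≤ k → k ≤ m → 1 < μ k ∧
      μ k < ((k : ℝ) * ((n : ℝ) - k)) / (((k : ℝ) - 1) * ((n : ℝ) + 1 - k)))
    (hGtop : G (m + 1) = 0) (hHtop : H (m + 1) = 1)
    (hG : ∀ k, 2 ≤ k → k ≤ m → G k = (1 - μ k) ^ 2 + (μ k) ^ 2 * G (k + 1))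
    (hH : ∀ k, 2 ≤ k → k ≤ m → H k = 2 + μ k * H (k + 1))
    (hF : ∀ k, 2 ≤ k → k ≤ m + 1 → F k = (1 + G k) / (2 * ((k : ℝ) - 2) + H k) ^ 2) :
    F 2 < 1 / ((n : ℝ) - 1) ^ 2 := by
  have hmR : (2:ℝ) ≤ (m:ℝ) := by exact_mod_cast hm
  have main : ∀ j k : ℕ, 2 ≤ k → k + j = m + 1 →
      (1 ≤ H k ∧ H k ≤ stmt8hH (m:ℝ) (k:ℝ) ∧
        (2*(m:ℝ)-1)^2 * (1 + G k) ≤ (2*((k:ℝ)-2) + H k)^2 ∧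
        (k ≤ m → (2*(m:ℝ)-1)^2 * (1 + G k) < (2*((k:ℝ)-2) + H k)^2)) := by
    intro j
    induction j with
    | zero =>
      intro k hk2 hkm
      have hk : k = m + 1 := by omega
      subst hk
      have hcast : ((m+1 : ℕ) : ℝ) = (m:ℝ) + 1 := by push_cast; ring
      refine ⟨by rw [hHtop], ?_, ?_, ?_⟩
      · rw [hHtop, hcast, stmt8hH_top _ hmR]
      · rw [hHtop, hGtop, hcast]; nlinarith
      · intro h; omega
    | succ j ih =>
      intro k hk2 hkj
      have hkm : k ≤ m := by omega
      have hk1 : 2 ≤ k + 1 := by omega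
      obtain ⟨ih1, ih2, ih3, _⟩ := ih (k+1) hk1 (by omega)
      obtain ⟨hμ1, hμ2⟩ := hμ k hk2 hkm
      have hkR : (2:ℝ) ≤ (k:ℝ) := by exact_mod_cast hk2
      have hkmR : (k:ℝ) ≤ (m:ℝ) := by exact_mod_cast hkm
      have hcast1 : ((k+1 : ℕ) : ℝ) = (k:ℝ) + 1 := by push_cast; ring
      rw [hcast1] at ih2 ih3
      have hμ2' : μ k < stmt8hmu (m:ℝ) (k:ℝ) := by
        unfold stmt8hmu
        have hnn : (n:ℝ) = 2*(m:ℝ) := by rw [hn]; push_cast; ring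
        rw [hnn] at hμ2
        convert hμ2 using 2 <;> ring
      have hHrec := hH k hk2 hkm
      have hGrec := hG k hk2 hkm
      have hhatpos : (1:ℝ) ≤ stmt8hH (m:ℝ) ((k:ℝ)+1) := le_trans ih1 ih2
      have hmupos : (0:ℝ) < stmt8hmu (m:ℝ) (k:ℝ) := by linarith
      have hH1 : 1 ≤ H k := by rw [hHrec]; nlinarith
      have hH2 : H k ≤ stmt8hH (m:ℝ) (k:ℝ) := by
        rw [hHrec, stmt8hH_id (m:ℝ) (k:ℝ) hmR hkR hkmR]
        have e1 : μ k * H (k+1) ≤ μ k * stmt8hH (m:ℝ) ((k:ℝ)+1) :=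
          mul_le_mul_of_nonneg_left ih2 (by linarith)
        have e2 : μ k * stmt8hH (m:ℝ) ((k:ℝ)+1) ≤
            stmt8hmu (m:ℝ) (k:ℝ) * stmt8hH (m:ℝ) ((k:ℝ)+1) :=
          mul_le_mul_of_nonneg_right (le_of_lt hμ2') (by linarith)
        linarith
      have hstrict : (2*(m:ℝ)-1)^2 * (1 + G k) < (2*((k:ℝ)-2) + H k)^2 := by
        have hkeyR := stmt8key (m:ℝ) (k:ℝ) hmR hkR hkmR
        have h7 : (2*((k:ℝ)-1)) * ((stmt8hmu (m:ℝ) (k:ℝ) + 1)*(2*((k:ℝ)-1))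
            + 2*(stmt8hmu (m:ℝ) (k:ℝ))*(stmt8hH (m:ℝ) ((k:ℝ)+1)))
            ≤ 2*(2*(m:ℝ)-1)^2 := by
          have hid : (2*((k:ℝ)-1)) * ((stmt8hmu (m:ℝ) (k:ℝ) + 1)*(2*((k:ℝ)-1))
              + 2*(stmt8hmu (m:ℝ) (k:ℝ))*(stmt8hH (m:ℝ) ((k:ℝ)+1)))
              = 2*(2*((k:ℝ)-1)^2*(stmt8hmu (m:ℝ) (k:ℝ) + 1)
                + 2*((k:ℝ)-1)*(stmt8hmu (m:ℝ) (k:ℝ))*(stmt8hH (m:ℝ) ((k:ℝ)+1))) := by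
            ring
          rw [hid]; linarith
        have ih3' : (2*(m:ℝ)-1)^2 * (1 + G (k+1))
            ≤ (2*((k:ℝ)-1) + H (k+1))^2 := by
          have hid2 : 2*((k:ℝ)+1-2) + H (k+1) = 2*((k:ℝ)-1) + H (k+1) := by ring
          rw [← hid2]; exact ih3
        have hs := stmt8step (2*(m:ℝ)-1) (G (k+1)) (H (k+1))
          (stmt8hH (m:ℝ) ((k:ℝ)+1)) (stmt8hmu (m:ℝ) (k:ℝ)) (μ k) (2*((k:ℝ)-1))
          ih3' hμ1 hμ2' ih1 ih2 (by linarith) h7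
        have e8 : 2*((k:ℝ)-2) + H k = 2*((k:ℝ)-1) + μ k * H (k+1) := by
          rw [hHrec]; ring
        rw [e8, hGrec]
        calc (2*(m:ℝ)-1)^2 * (1 + ((1 - μ k)^2 + μ k^2 * G (k+1)))
            < (2*((k:ℝ)-1) + μ k * H (k+1))^2 := hs
          _ = (2*((k:ℝ)-1) + μ k * H (k+1))^2 := rfl
      exact ⟨hH1, hH2, le_of_lt hstrict, fun _ => hstrict⟩
  obtain ⟨h1, _, _, h4⟩ := main (m - 1) 2 le_rfl (by omega)
  have hstrict := h4 hm
  rw [hF 2 le_rfl (by omega)]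
  have hnR : (n:ℝ) - 1 = 2*(m:ℝ) - 1 := by rw [hn]; push_cast; ring
  rw [hnR]
  have hc : (((2:ℕ)):ℝ) = (2:ℝ) := by norm_num
  rw [hc] at hstrict ⊢
  have hid : 2*((2:ℝ)-2) + H 2 = H 2 := by ring
  rw [hid] at hstrict ⊢
  have hHpos : (0:ℝ) < H 2 := by linarith
  have hc2 : (0:ℝ) < (2*(m:ℝ)-1)^2 := by nlinarith
  rw [div_lt_div_iff₀ (by positivity) hc2]
  nlinarith [hstrict]
end

section
/- Under the hypotheses and with the definitions below, and assuming moreover m ≥ 3, one has P_m < −(n−3), where for 3 ≤ k ≤ m the quantity P_k is defined by P_k = 2(n−2)·((1−μ_3)² + (1−μ_4)²μ_3² + ⋯ + (1−μ_k)²μ_3²⋯μ_{k−1}²) − (2 + 2μ_3 + 2μ_3μ_4 + ⋯ + 2μ_3⋯μ_{k−1}) − (n+1−2k)·μ_3⋯μ_k. More precisely, P_{k+1} < P_k for every 3 ≤ k ≤ m−1, and P_3 = 2(n−2)(1−μ_3)² − 2 − (n−5)μ_3 < −(n−3). (This is the claim established in the proof of Lemma 5.4 of the paper.) -/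
set_option maxHeartbeats 2000000 in
/-- with `n = 2m`, `m ≥ 3`, `1 < μ_k < k(n−k)/((k−1)(n+1−k))`, and
`P_k = 2(n−2)·∑_{j=3}^{k}(1−μ_j)²(μ_3⋯μ_{j−1})² − (2 + ∑_{j=3}^{k−1} 2μ_3⋯μ_j)
− (n+1−2k)·μ_3⋯μ_k`, one has `P_{k+1} < P_k` for `3 ≤ k ≤ m−1`,
`P_3 = 2(n−2)(1−μ_3)² − 2 − (n−5)μ_3 < −(n−3)`, and `P_m < −(n−3)`. -/
theorem stmt9 (m : ℕ) (hm : 3 ≤ m) (n : ℕ) (hn : n = 2 * m)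
    (μ G H F : ℕ → ℝ)
    (hμ : ∀ k, 2 ≤ k → k ≤ m → 1 < μ k ∧
      μ k < ((k : ℝ) * ((n : ℝ) - k)) / (((k : ℝ) - 1) * ((n : ℝ) + 1 - k)))
    (hGtop : G (m + 1) = 0) (hHtop : H (m + 1) = 1)
    (hG : ∀ k, 2 ≤ k → k ≤ m → G k = (1 - μ k) ^ 2 + (μ k) ^ 2 * G (k + 1))
    (hH : ∀ k, 2 ≤ k → k ≤ m → H k = 2 + μ k * H (k + 1))
    (hF : ∀ k, 2 ≤ k → k ≤ m + 1 → F k = (1 + G k) / (2 * ((k : ℝ) - 2) + H k) ^ 2)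
    (P : ℕ → ℝ)
    (hP : ∀ k, 3 ≤ k → k ≤ m → P k =
      2 * ((n : ℝ) - 2) *
        (∑ j ∈ Finset.Icc 3 k, (1 - μ j) ^ 2 * (∏ l ∈ Finset.Icc 3 (j - 1), μ l) ^ 2) -
      (2 + ∑ j ∈ Finset.Icc 3 (k - 1), 2 * ∏ l ∈ Finset.Icc 3 j, μ l) -
      ((n : ℝ) + 1 - 2 * k) * ∏ l ∈ Finset.Icc 3 k, μ l) :
    (∀ k, 3 ≤ k → k ≤ m - 1 → P (k + 1) < P k) ∧
    P 3 = 2 * ((n : ℝ) - 2) * (1 - μ 3) ^ 2 - 2 - ((n : ℝ) - 5) * μ 3 ∧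
    P 3 < -((n : ℝ) - 3) ∧
    P m < -((n : ℝ) - 3) := by

  have hmR : (3:ℝ) ≤ (m:ℝ) := by exact_mod_cast hm
  have hnR : (n:ℝ) = 2 * (m:ℝ) := by rw [hn]; push_cast; ring
  have hn6 : (6:ℝ) ≤ (n:ℝ) := by rw [hnR]; linarith
  -- key bound on products
  have key : ∀ k, 3 ≤ k → k ≤ m →
      0 < ∏ l ∈ Finset.Icc 3 k, μ l ∧
      2 * ((n:ℝ) - 2) * ∏ l ∈ Finset.Icc 3 k, μ l < (k:ℝ) * ((n:ℝ) - (k:ℝ)) := by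
    intro k hk3
    induction k, hk3 using Nat.le_induction with
    | base =>
      intro _
      have h3 := hμ 3 (by norm_num) hm
      have hub := h3.2
      have hden : (0:ℝ) < (((3:ℕ):ℝ) - 1) * ((n:ℝ) + 1 - ((3:ℕ):ℝ)) := by
        push_cast; nlinarith
      have h2 := (lt_div_iff₀ hden).mp hub
      simp only [Finset.Icc_self, Finset.prod_singleton]
      push_cast at h2
      constructor
      · linarith [h3.1]
      · push_cast; nlinarith [h2]
    | succ k hk3 ih =>
      intro hk1m
      have hkm : k ≤ m := by omega
      obtain ⟨hQpos, hQlt⟩ := ih hkm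
      have hμk := hμ (k+1) (by omega) hk1m
      have hkR : (3:ℝ) ≤ (k:ℝ) := by exact_mod_cast hk3
      have hk1R : (k:ℝ) + 1 ≤ (m:ℝ) := by exact_mod_cast hk1m
      have hnk : (0:ℝ) < (n:ℝ) - (k:ℝ) := by rw [hnR]; linarith
      have hden : (0:ℝ) < (((k+1:ℕ):ℝ) - 1) * ((n:ℝ) + 1 - ((k+1:ℕ):ℝ)) := by
        push_cast; nlinarith
      have h2 := (lt_div_iff₀ hden).mp hμk.2
      push_cast at h2
      rw [Finset.prod_Icc_succ_top (by omega : 3 ≤ k+1)]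
      have hμpos : (0:ℝ) < μ (k+1) := by linarith [hμk.1]
      refine ⟨mul_pos hQpos hμpos, ?_⟩
      push_cast
      nlinarith [mul_lt_mul_of_pos_right hQlt hμpos, h2]
  -- decrease lemma
  have hdec : ∀ k, 3 ≤ k → k + 1 ≤ m → P (k+1) < P k := by
    intro k hk3 hk1m
    have hkm : k ≤ m := by omega
    obtain ⟨hQpos, hQlt⟩ := key k hk3 hkm
    have hμk := hμ (k+1) (by omega) hk1m
    have hkR : (3:ℝ) ≤ (k:ℝ) := by exact_mod_cast hk3
    have hk1R : (k:ℝ) + 1 ≤ (m:ℝ) := by exact_mod_cast hk1m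
    have hnk : (0:ℝ) < (n:ℝ) - (k:ℝ) := by rw [hnR]; linarith
    have hden : (0:ℝ) < (((k+1:ℕ):ℝ) - 1) * ((n:ℝ) + 1 - ((k+1:ℕ):ℝ)) := by
      push_cast; nlinarith
    have h2 := (lt_div_iff₀ hden).mp hμk.2
    push_cast at h2
    have ht : (0:ℝ) < μ (k+1) - 1 := by linarith [hμk.1]
    have hb2 : (k:ℝ) * ((n:ℝ) - (k:ℝ)) * (μ (k+1) - 1) < (n:ℝ) - 2*(k:ℝ) - 1 := by
      nlinarith [h2]
    have hA := mul_lt_mul_of_pos_right hQlt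
      (mul_pos (pow_pos ht 2) hQpos)
    have hB := mul_lt_mul_of_pos_right hb2 (mul_pos ht hQpos)
    rw [hP k hk3 hkm, hP (k+1) (by omega) hk1m]
    rw [Finset.sum_Icc_succ_top (by omega : 3 ≤ k+1)]
    have hk1s : k + 1 - 1 = k := by omega
    rw [hk1s]
    have hk' : k - 1 + 1 = k := by omega
    have e2 : ∑ j ∈ Finset.Icc 3 k, 2 * ∏ l ∈ Finset.Icc 3 j, μ l
        = (∑ j ∈ Finset.Icc 3 (k-1), 2 * ∏ l ∈ Finset.Icc 3 j, μ l)
          + 2 * ∏ l ∈ Finset.Icc 3 k, μ l := by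
      conv_lhs => rw [← hk']
      rw [Finset.sum_Icc_succ_top (by omega : 3 ≤ k-1+1), hk']
    rw [e2, Finset.prod_Icc_succ_top (by omega : 3 ≤ k+1)]
    set Qk := ∏ l ∈ Finset.Icc 3 k, μ l with hQk
    set S1 := ∑ j ∈ Finset.Icc 3 k, (1 - μ j) ^ 2 * (∏ l ∈ Finset.Icc 3 (j - 1), μ l) ^ 2 with hS1
    set S2 := ∑ j ∈ Finset.Icc 3 (k-1), 2 * ∏ l ∈ Finset.Icc 3 j, μ l with hS2
    clear_value Qk S1 S2
    push_cast
    have hfin : 2 * ((n:ℝ) - 2) * (μ (k+1) - 1)^2 * Qk * Qk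
        < ((n:ℝ) - 2*(k:ℝ) - 1) * ((μ (k+1) - 1) * Qk) := by nlinarith [hA, hB]
    nlinarith [hfin]
  -- P 3
  have hIcc32 : Finset.Icc 3 2 = (∅ : Finset ℕ) := by decide
  have hP3eq : P 3 = 2 * ((n:ℝ) - 2) * (1 - μ 3) ^ 2 - 2 - ((n:ℝ) - 5) * μ 3 := by
    rw [hP 3 le_rfl hm]
    simp only [show (3:ℕ) - 1 = 2 from rfl, hIcc32, Finset.Icc_self,
      Finset.sum_singleton, Finset.prod_singleton, Finset.sum_empty, Finset.prod_empty]
    push_cast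
    ring
  have hμ3 := (hμ 3 (by norm_num) hm).1
  have hQ3 := (key 3 le_rfl hm).2
  simp only [Finset.Icc_self, Finset.prod_singleton] at hQ3
  push_cast at hQ3
  have hP3lt : P 3 < -((n:ℝ) - 3) := by
    rw [hP3eq]
    have ht : (0:ℝ) < μ 3 - 1 := by linarith
    have hlin : 2 * ((n:ℝ) - 2) * (μ 3 - 1) < (n:ℝ) - 5 := by nlinarith [hQ3]
    nlinarith [mul_lt_mul_of_pos_right hlin ht]
  have hall : ∀ k, 3 ≤ k → k ≤ m → P k < -((n:ℝ) - 3) := by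
    intro k hk3
    induction k, hk3 using Nat.le_induction with
    | base => intro _; exact hP3lt
    | succ k hk3 ih =>
      intro h
      exact lt_trans (hdec k hk3 h) (ih (by omega))
  exact ⟨fun k hk3 hkm1 => hdec k hk3 (by omega), hP3eq, hP3lt, hall m hm le_rfl⟩
end

section
/- Let m ≥ 2 be an integer, n = 2m, and let b₁, …, b_m be positive real numbers satisfying b_{k−1}·k(n−k) > b_k·(k−1)(n+1−k) for every 2 ≤ k ≤ m. Then b₁² + ∑_{k=1}^{m−1} (b_k − b_{k+1})² > (6/(n(n²−1)))·(2b₁ + 2b₂ + ⋯ + 2b_{m−1} + b_m)². (This is the Cauchy–Schwarz argument in the Remark after Theorem 5.2 showing that at the zeros of q_n the extrinsic curvature satisfies K_σ < −6/(n²(n²−1)) for even n ≥ 4.) -/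
lemma tele_aux (a : ℝ) (b : ℕ → ℝ) (m : ℕ) (hm : 1 ≤ m) :
    a * b 1 - ∑ j ∈ Finset.Icc 1 (m-1), (a - 2*(j:ℝ)) * (b j - b (j+1))
      = 2 * ∑ j ∈ Finset.Icc 1 (m-1), b j + (a - 2*(m:ℝ) + 2) * b m := by
  induction m, hm using Nat.le_induction with
  | base => simp
  | succ m hm ih =>
      have h1 : m + 1 - 1 = (m - 1) + 1 := by omega
      have h2 : (m - 1) + 1 = m := by omega
      rw [h1, Finset.sum_Icc_succ_top (by omega), Finset.sum_Icc_succ_top (by omega), h2]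
      push_cast
      linear_combination ih

lemma sqsum_aux (a : ℝ) (m : ℕ) :
    ∑ j ∈ Finset.range m, (a - 2*(j:ℝ))^2
      = (m:ℝ) * a^2 - 2*a*(m:ℝ)*((m:ℝ)-1) + 2/3*(m:ℝ)*((m:ℝ)-1)*(2*(m:ℝ)-1) := by
  induction m with
  | zero => simp
  | succ m ih => rw [Finset.sum_range_succ, ih]; push_cast; ring

lemma split_aux (m : ℕ) (hm : 1 ≤ m) (f : ℕ → ℝ) :
    ∑ j ∈ Finset.range m, f j = f 0 + ∑ j ∈ Finset.Icc 1 (m-1), f j := by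
  have h1 : Finset.Icc 1 (m-1) = Finset.Ico 1 m := by
    rw [← Finset.Ico_add_one_right_eq_Icc]
    congr 1
    omega
  rw [h1, Finset.range_eq_Ico, Finset.sum_eq_sum_Ico_succ_bot (by omega)]

/-- for `n = 2m`, `m ≥ 2`, and positive reals `b₁,…,b_m` with
`b_{k−1}·k(n−k) > b_k·(k−1)(n+1−k)` for `2 ≤ k ≤ m`, one has
`b₁² + ∑_{k=1}^{m−1}(b_k − b_{k+1})² > (6/(n(n²−1)))·(2b₁+⋯+2b_{m−1}+b_m)²`. -/
theorem stmt12 (m : ℕ) (hm : 2 ≤ m) (n : ℕ) (hn : n = 2 * m) (b : ℕ → ℝ)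
    (hb : ∀ k, 1 ≤ k → k ≤ m → 0 < b k)
    (hrat : ∀ k, 2 ≤ k → k ≤ m →
      b (k - 1) * ((k : ℝ) * ((n : ℝ) - k)) >
        b k * (((k : ℝ) - 1) * ((n : ℝ) + 1 - k))) :
    (b 1) ^ 2 + ∑ k ∈ Finset.Icc 1 (m - 1), (b k - b (k + 1)) ^ 2 >
      (6 / ((n : ℝ) * ((n : ℝ) ^ 2 - 1))) *
        (2 * ∑ k ∈ Finset.Icc 1 (m - 1), b k + b m) ^ 2 := by
  have hm1 : 1 ≤ m := by omega
  have hna : (n:ℝ) = 2*(m:ℝ) := by rw [hn]; push_cast; ring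
  have hmR : (2:ℝ) ≤ (m:ℝ) := by exact_mod_cast hm
  have hX : (0:ℝ) < (n:ℝ) * ((n:ℝ)^2 - 1) := by rw [hna]; nlinarith
  set c : ℕ → ℝ := fun j => 2*(m:ℝ) - 1 - 2*(j:ℝ) with hc
  set e : ℕ → ℝ := fun j => if j = 0 then b 1 else -(b j - b (j+1)) with he
  -- sum identities
  have hD : ∑ j ∈ Finset.range m, (e j)^2
      = (b 1) ^ 2 + ∑ k ∈ Finset.Icc 1 (m - 1), (b k - b (k + 1)) ^ 2 := by
    rw [split_aux m hm1]
    simp only [he]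
    norm_num
    apply Finset.sum_congr rfl
    intro j hj
    have : j ≠ 0 := by simp [Finset.mem_Icc] at hj; omega
    simp [this]
    ring
  have hS : ∑ j ∈ Finset.range m, c j * e j
      = 2 * ∑ k ∈ Finset.Icc 1 (m - 1), b k + b m := by
    rw [split_aux m hm1]
    have h1 : c 0 * e 0 = (2*(m:ℝ) - 1) * b 1 := by simp [hc, he]
    have h2 : ∑ j ∈ Finset.Icc 1 (m-1), c j * e j
        = - ∑ j ∈ Finset.Icc 1 (m-1), (2*(m:ℝ) - 1 - 2*(j:ℝ)) * (b j - b (j+1)) := by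
      rw [← Finset.sum_neg_distrib]
      apply Finset.sum_congr rfl
      intro j hj
      have : j ≠ 0 := by simp [Finset.mem_Icc] at hj; omega
      simp [hc, he, this]
      ring
    rw [h1, h2]
    have := tele_aux (2*(m:ℝ) - 1) b m hm1
    linear_combination this
  have hC : ∑ j ∈ Finset.range m, (c j)^2 = (n:ℝ) * ((n:ℝ)^2 - 1) / 6 := by
    have := sqsum_aux (2*(m:ℝ) - 1) m
    simp only [hc]
    rw [this, hna]
    ring
  have hCpos : 0 < ∑ j ∈ Finset.range m, (c j)^2 := by rw [hC]; linarith
  set S := ∑ j ∈ Finset.range m, c j * e j with hSdef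
  set C := ∑ j ∈ Finset.range m, (c j)^2 with hCdef
  set t := S / C with ht
  -- expansion
  have expand : ∑ j ∈ Finset.range m, (e j - t * c j)^2
      = (∑ j ∈ Finset.range m, (e j)^2) - 2*t*S + t^2 * C := by
    rw [hSdef, hCdef, Finset.mul_sum, Finset.mul_sum, ← Finset.sum_sub_distrib,
      ← Finset.sum_add_distrib]
    apply Finset.sum_congr rfl
    intro j _
    ring
  -- strictness: not all e j = t * c j
  have hstrict : ∃ j ∈ Finset.range m, 0 < (e j - t * c j)^2 := by
    by_cases h0 : e 0 - t * c 0 = 0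
    · refine ⟨1, by simp; omega, ?_⟩
      have h1 : e 1 - t * c 1 ≠ 0 := by
        intro h1
        have hb1 : b 1 = t * (2*(m:ℝ) - 1) := by
          simp [he, hc] at h0
          linarith [h0]
        have hb2 : b 2 = 2*t*(m:ℝ)*2 - 2*t - 2*t := by
          simp [he, hc] at h1
          linear_combination h1 + hb1
        have hr := hrat 2 (le_refl 2) hm
        norm_num at hr
        rw [hna] at hr
        nlinarith [hr, hb1, hb2]
      positivity
    · exact ⟨0, by simp; omega, by positivity⟩
  have hsum : 0 < ∑ j ∈ Finset.range m, (e j - t * c j)^2 := by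
    obtain ⟨j, hj, hjpos⟩ := hstrict
    exact Finset.sum_pos' (fun i _ => sq_nonneg _) ⟨j, hj, hjpos⟩
  rw [expand] at hsum
  rw [hD] at hsum
  rw [hS] at hsum ht
  rw [hC] at hsum ht
  -- final algebra
  set Sv := 2 * ∑ k ∈ Finset.Icc 1 (m - 1), b k + b m with hSv
  have hXne : (n:ℝ) * ((n:ℝ)^2 - 1) ≠ 0 := ne_of_gt hX
  have key : 2*t*Sv - t^2 * ((n:ℝ) * ((n:ℝ)^2 - 1) / 6)
      = 6 / ((n:ℝ) * ((n:ℝ)^2 - 1)) * Sv^2 := by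
    rw [ht]
    field_simp
    ring
  linarith [hsum, key]
end

section
/- Let n ≥ 1 and let Y, Z be Hermitian n×n complex matrices with tr(YZ) = 0 and tr(Y²) = tr(Z²) > 0, and set U = Y + iZ. Then equality tr([Y,Z]²) = −2·(tr(Y²)·tr(Z²) − (tr(YZ))²) holds if and only if U² = 0 and the positive semidefinite matrix U·Uᴴ has rank at most 1 (equivalently, U·Uᴴ has at most one nonzero eigenvalue). (This is the equality characterization in the proof of Proposition 3.1, identifying the tangent planes in SL(n,ℂ)/SU(n) of extremal sectional curvature −1/n.) -/
/-!
Write `B = U Uᴴ` and `C = U²`. Since `Uᴴ U - U Uᴴ = 2i [Y, Z]`, cyclicity of the trace gives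
`-2 tr([Y, Z]²) = tr(B²) - tr(C Cᴴ)`, while `tr B = tr(Y²) + tr(Z²)`; under the hypotheses the
equality in question therefore reads `tr(B²) - tr(C Cᴴ) = (tr B)²`. In terms of the eigenvalues
`λᵢ ≥ 0` of `B`, `tr(B²) = ∑ λᵢ² ≤ (∑ λᵢ)² = (tr B)²`, with equality iff at most one `λᵢ` is
nonzero, i.e. `rank B ≤ 1`; and `tr(C Cᴴ) ≥ 0` vanishes iff `C = 0`.
-/

open Matrix
open scoped ComplexOrder

theorem Fintype.sum_sq_eq_sq_sum_iff {ι R : Type*} [Fintype ι] [CommRing R] [LinearOrder R]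
    [IsStrictOrderedRing R] {f : ι → R} (hf : ∀ i, 0 ≤ f i) :
    ∑ i, f i ^ 2 = (∑ i, f i) ^ 2 ↔ Fintype.card {i // f i ≠ 0} ≤ 1 := by
  classical
  have hterm : ∀ i ∈ Finset.univ, f i * f i ≤ f i * ∑ j, f j := fun i hi =>
    mul_le_mul_of_nonneg_left (Finset.single_le_sum (fun j _ => hf j) hi) (hf i)
  have hsupp : ∀ i, ∑ j, f j = f i ↔ ∀ j ≠ i, f j = 0 := fun i => by
    rw [← Finset.add_sum_erase _ _ (Finset.mem_univ i), add_eq_left,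
      Finset.sum_eq_zero_iff_of_nonneg fun j _ => hf j]
    simp
  simp only [sq, Finset.sum_mul, Finset.sum_eq_sum_iff_of_le hterm, Finset.mem_univ,
    forall_const, eq_comm (a := f _ * f _), mul_eq_mul_left_iff, hsupp, Fintype.card_le_one_iff,
    Subtype.forall, Subtype.mk.injEq]
  refine forall_congr' fun i => ?_
  rw [or_iff_not_imp_right]
  exact imp_congr_right fun _ => forall_congr' fun j => by rw [not_imp_comm, @eq_comm _ i]

theorem sub_eq_iff_of_le_of_nonneg {α : Type*} [AddCommGroup α] [PartialOrder α]
    [IsOrderedAddMonoid α] {a b c : α} (hab : a ≤ b) (hc : 0 ≤ c) :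
    a - c = b ↔ c = 0 ∧ a = b := by
  refine ⟨fun h => ?_, fun ⟨hc0, hab⟩ => by rw [hc0, sub_zero, hab]⟩
  have hc0 : c = 0 := le_antisymm ((le_sub_self_iff a).1 (h ▸ hab)) hc
  exact ⟨hc0, by rwa [hc0, sub_zero] at h⟩

namespace Matrix

section RCLike

variable {𝕜 n : Type*} [RCLike 𝕜] [Fintype n] [DecidableEq n] {A : Matrix n n 𝕜}

theorem IsHermitian.trace_pow_eq_sum_eigenvalues_pow (hA : A.IsHermitian) (k : ℕ) :
    (A ^ k).trace = ∑ i, (hA.eigenvalues i : 𝕜) ^ k := by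
  rw [← cfc_pow_id (R := ℝ) A k hA.isSelfAdjoint, hA.cfc_eq, IsHermitian.cfc,
    Unitary.conjStarAlgAut_apply, trace_mul_cycle, Unitary.coe_star_mul_self, one_mul,
    trace_diagonal]
  simp

theorem PosSemidef.trace_sq_le_sq_trace (hA : A.PosSemidef) : (A ^ 2).trace ≤ A.trace ^ 2 := by
  rw [hA.1.trace_pow_eq_sum_eigenvalues_pow, hA.1.trace_eq_sum_eigenvalues]
  exact_mod_cast Finset.sum_sq_le_sq_sum_of_nonneg fun i _ => hA.eigenvalues_nonneg i

theorem PosSemidef.trace_sq_eq_sq_trace_iff (hA : A.PosSemidef) :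
    (A ^ 2).trace = A.trace ^ 2 ↔ A.rank ≤ 1 := by
  rw [hA.1.trace_pow_eq_sum_eigenvalues_pow, hA.1.trace_eq_sum_eigenvalues,
    hA.1.rank_eq_card_non_zero_eigs]
  exact_mod_cast Fintype.sum_sq_eq_sq_sum_iff hA.eigenvalues_nonneg

theorem PosSemidef.trace_sq_sub_trace_mul_conjTranspose_eq_sq_trace_iff (hA : A.PosSemidef)
    {m : Type*} [Fintype m] (C : Matrix n m 𝕜) :
    (A ^ 2).trace - (C * Cᴴ).trace = A.trace ^ 2 ↔ C = 0 ∧ A.rank ≤ 1 := by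
  rw [sub_eq_iff_of_le_of_nonneg hA.trace_sq_le_sq_trace
    (posSemidef_self_mul_conjTranspose C).trace_nonneg, trace_mul_conjTranspose_self_eq_zero_iff,
    hA.trace_sq_eq_sq_trace_iff]

end RCLike

theorem trace_sq_conjTranspose_mul_self_sub_mul_conjTranspose_self {R n : Type*} [CommRing R]
    [StarRing R] [Fintype n] [DecidableEq n] (U : Matrix n n R) :
    ((Uᴴ * U - U * Uᴴ) ^ 2).trace = 2 * (((U * Uᴴ) ^ 2).trace - (U * U * (U * U)ᴴ).trace) := by
  simp only [sq, sub_mul, mul_sub, trace_sub, conjTranspose_mul, Matrix.mul_assoc]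
  linear_combination (norm := skip) trace_mul_comm Uᴴ (U * (Uᴴ * U))
    - trace_mul_comm Uᴴ (U * (U * Uᴴ)) - trace_mul_comm (U * (Uᴴ * Uᴴ)) U
  simp only [Matrix.mul_assoc]
  ring

namespace IsHermitian

variable {n : Type*} {Y Z : Matrix n n ℂ}

theorem conjTranspose_add_I_smul (hY : Y.IsHermitian) (hZ : Z.IsHermitian) :
    (Y + Complex.I • Z)ᴴ = Y - Complex.I • Z := by
  simp [hY.eq, hZ.eq, sub_eq_add_neg]

theorem conjTranspose_mul_self_sub_mul_conjTranspose_self_add_I_smul [Fintype n]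
    (hY : Y.IsHermitian) (hZ : Z.IsHermitian) :
    (Y + Complex.I • Z)ᴴ * (Y + Complex.I • Z) - (Y + Complex.I • Z) * (Y + Complex.I • Z)ᴴ =
      (2 * Complex.I) • (Y * Z - Z * Y) := by
  rw [conjTranspose_add_I_smul hY hZ]
  simp only [mul_add, add_mul, mul_sub, sub_mul, smul_mul_assoc, mul_smul_comm]
  module

theorem trace_mul_conjTranspose_add_I_smul [Fintype n] (hY : Y.IsHermitian) (hZ : Z.IsHermitian) :
    ((Y + Complex.I • Z) * (Y + Complex.I • Z)ᴴ).trace = (Y * Y).trace + (Z * Z).trace := by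
  rw [conjTranspose_add_I_smul hY hZ]
  simp only [mul_sub, add_mul, smul_mul_assoc, mul_smul_comm, trace_add, trace_sub,
    trace_smul, smul_eq_mul, trace_mul_comm Z Y]
  linear_combination (-(Z * Z).trace) * Complex.I_sq

end IsHermitian

end Matrix

theorem stmt15_general (n : ℕ) (Y Z : Matrix (Fin n) (Fin n) ℂ)
    (hY : Y.IsHermitian) (hZ : Z.IsHermitian)
    (h0 : (Y * Z).trace = 0) (heq : (Y * Y).trace = (Z * Z).trace)
    (U : Matrix (Fin n) (Fin n) ℂ) (hU : U = Y + Complex.I • Z) :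
    (((Y * Z - Z * Y) * (Y * Z - Z * Y)).trace =
        -2 * ((Y * Y).trace * (Z * Z).trace - ((Y * Z).trace) ^ 2)) ↔
      (U * U = 0 ∧ (U * Uᴴ).rank ≤ 1) := by
  subst hU
  have hcomm := trace_sq_conjTranspose_mul_self_sub_mul_conjTranspose_self (Y + Complex.I • Z)
  rw [hY.conjTranspose_mul_self_sub_mul_conjTranspose_self_add_I_smul hZ, smul_pow, trace_smul,
    smul_eq_mul, mul_pow, Complex.I_sq, sq (Y * Z - Z * Y)] at hcomm
  rw [← (posSemidef_self_mul_conjTranspose _).trace_sq_sub_trace_mul_conjTranspose_eq_sq_trace_iff,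
    hY.trace_mul_conjTranspose_add_I_smul hZ, h0, ← heq]
  constructor
  · intro h
    linear_combination -hcomm / 2 - 2 * h
  · intro h
    linear_combination -hcomm / 4 - h / 2

/-- for Hermitian `Y, Z` with `tr(YZ) = 0` and `tr(Y²) = tr(Z²) > 0`, and
`U = Y + iZ`, equality `tr([Y,Z]²) = −2(tr(Y²)tr(Z²) − tr(YZ)²)` holds iff `U² = 0` and
`U·Uᴴ` has rank at most 1. -/
theorem stmt15 (n : ℕ) (hn : 1 ≤ n) (Y Z : Matrix (Fin n) (Fin n) ℂ)
    (hY : Y.IsHermitian) (hZ : Z.IsHermitian)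
    (h0 : (Y * Z).trace = 0) (heq : (Y * Y).trace = (Z * Z).trace)
    (hpos : 0 < (Y * Y).trace.re)
    (U : Matrix (Fin n) (Fin n) ℂ) (hU : U = Y + Complex.I • Z) :
    (((Y * Z - Z * Y) * (Y * Z - Z * Y)).trace =
        -2 * ((Y * Y).trace * (Z * Z).trace - ((Y * Z).trace) ^ 2)) ↔
      (U * U = 0 ∧ (U * Uᴴ).rank ≤ 1) :=
  stmt15_general n Y Z hY hZ h0 heq U hU
end
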